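/- arXiv:2601.08453 — 2 statements merged into one kernel-verified Lean document; each statement's English description precedes it below -/
import Mathlib

section
/- Let k be a natural number and m a positive integer. Then lim_{r→∞} r^k · M_r(k,m) = (m−1+k)!/(m−1)!, the limit being taken over positive integers r tending to infinity. (The right-hand side equals the k-th moment of a sum of m i.i.d. standard exponential random variables.) -/
/-!
By the multinomial theorem and Fubini, `M_r(k,m)` is a sum over compositions `n` of `k` into `m`
parts of `multinomial n · ∏ᵢ E[X^(nᵢ)]` with `X ~ Beta(1,r)`. The Beta integral gives
`E[X^n] = n! / ((r+1)(r+2)⋯(r+n))`, so `r^n E[X^n] → n!`, and each term of `r^k M_r(k,m)` tends to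
`multinomial n · ∏ᵢ nᵢ! = k!`. There are `C(m-1+k, k)` compositions, whence the limit
`k! · C(m-1+k, k) = (m-1+k)!/(m-1)!`.
-/

open MeasureTheory in
/-- `momentM r m k` is the `k`-th moment of the sum of `m` i.i.d. Beta(1,r) random
variables, written as an integral over the cube `[0,1]^m`. -/
noncomputable def momentM (r m k : ℕ) : ℝ :=
  ∫ x in Set.Icc (0 : Fin m → ℝ) 1,
    (∑ i, x i) ^ k * ∏ i, (r : ℝ) * (1 - x i) ^ (r - 1)

open MeasureTheory Filter Finset Nat Topology

theorem integral_pow_mul_one_sub_pow (a b : ℕ) :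
    ∫ x in (0 : ℝ)..1, x ^ a * (1 - x) ^ b = (a ! * b ! : ℝ) / (a + b + 1)! := by
  have h := Complex.betaIntegral_eq_Gamma_mul_div (a + 1) (b + 1)
    (by simp; positivity) (by simp; positivity)
  have hsum : (a + 1 + (b + 1) : ℂ) = ((a + b + 1 : ℕ) : ℂ) + 1 := by push_cast; ring
  rw [Complex.betaIntegral, hsum, Complex.Gamma_nat_eq_factorial, Complex.Gamma_nat_eq_factorial,
    Complex.Gamma_nat_eq_factorial] at h
  simp only [add_sub_cancel_right, Complex.cpow_natCast] at h
  rw [← Complex.ofReal_inj, ← intervalIntegral.integral_ofReal]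
  push_cast
  exact h

theorem setIntegral_pow_mul_betaOneDensity (n : ℕ) {r : ℕ} (hr : 0 < r) :
    ∫ x in Set.Icc (0 : ℝ) 1, x ^ n * (r * (1 - x) ^ (r - 1)) = n ! / (r + 1).ascFactorial n := by
  rw [integral_Icc_eq_integral_Ioc, ← intervalIntegral.integral_of_le zero_le_one]
  simp_rw [mul_left_comm _ (r : ℝ)]
  rw [intervalIntegral.integral_const_mul, integral_pow_mul_one_sub_pow,
    show n + (r - 1) + 1 = r + n by omega, ← factorial_mul_ascFactorial, ← mul_factorial_pred hr.ne']
  push_cast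
  field_simp

theorem tendsto_pow_div_ascFactorial (n : ℕ) :
    Tendsto (fun r : ℕ => (r : ℝ) ^ n / (r + 1).ascFactorial n) atTop (𝓝 1) := by
  have hfactor (j : ℕ) : Tendsto (fun r : ℕ => (r : ℝ) / (r + (1 + j))) atTop (𝓝 1) :=
    tendsto_natCast_div_add_atTop _
  convert tendsto_finsetProd (range n) fun j _ => hfactor j with r
  · rw [ascFactorial_eq_prod_range, prod_div_distrib, prod_const, card_range]
    push_cast
    simp_rw [add_assoc]
  · simp

theorem tendsto_pow_mul_setIntegral_pow_mul_betaOneDensity (n : ℕ) :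
    Tendsto (fun r : ℕ => (r : ℝ) ^ n * ∫ x in Set.Icc (0 : ℝ) 1, x ^ n * (r * (1 - x) ^ (r - 1)))
      atTop (𝓝 (n ! : ℝ)) := by
  have h := (tendsto_pow_div_ascFactorial n).const_mul (n ! : ℝ)
  rw [mul_one] at h
  refine h.congr' ?_
  filter_upwards [eventually_gt_atTop 0] with r hr
  rw [setIntegral_pow_mul_betaOneDensity n hr]
  ring

theorem setIntegral_Icc_pi_prod {ι 𝕜 : Type*} [Fintype ι] [RCLike 𝕜] (a b : ι → ℝ)
    (g : ι → ℝ → 𝕜) :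
    ∫ x in Set.Icc a b, ∏ i, g i (x i) = ∏ i, ∫ t in Set.Icc (a i) (b i), g i t := by
  rw [← Set.pi_univ_Icc, volume_pi, Measure.restrict_pi_pi, integral_fintype_prod_eq_prod]

theorem setIntegral_Icc_sum_pow_mul_prod {ι : Type*} [Fintype ι] [DecidableEq ι]
    (a b : ι → ℝ) {f : ℝ → ℝ} (hf : Continuous f) (k : ℕ) :
    ∫ x in Set.Icc a b, (∑ i, x i) ^ k * ∏ i, f (x i) =
      ∑ n ∈ piAntidiag univ k,
        multinomial univ n * ∏ i, ∫ t in Set.Icc (a i) (b i), t ^ n i * f t := by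
  simp_rw [sum_pow_eq_sum_piAntidiag, sum_mul, mul_assoc, ← prod_mul_distrib]
  rw [integral_finsetSum _ fun n _ => (Continuous.integrableOn_Icc
    (by fun_prop : Continuous fun x : ι → ℝ => ∏ i, x i ^ n i * f (x i))).const_mul _]
  refine sum_congr rfl fun n _ => ?_
  rw [integral_const_mul, setIntegral_Icc_pi_prod a b fun i t => t ^ n i * f t]

theorem card_piAntidiag_univ (ι : Type*) [Fintype ι] [DecidableEq ι] (k : ℕ) :
    #(piAntidiag (univ : Finset ι) k) = (Fintype.card ι + k - 1).choose k := by
  rw [← map_sym_eq_piAntidiag, card_map, sym_univ, Finset.card_univ, Sym.card_sym_eq_choose]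

theorem sum_piAntidiag_multinomial_mul_prod_factorial (ι : Type*) [Fintype ι] [DecidableEq ι]
    (k : ℕ) :
    ∑ n ∈ piAntidiag (univ : Finset ι) k, multinomial univ n * ∏ i, (n i)! =
      (Fintype.card ι + k - 1).choose k * k ! := by
  rw [sum_congr rfl fun n hn => ?_, sum_const, card_piAntidiag_univ, smul_eq_mul]
  rw [mul_comm, multinomial_spec, (mem_piAntidiag.1 hn).1]

theorem stmt_15 (k : ℕ) (m : ℕ) (hm : 0 < m) :
    Filter.Tendsto (fun r : ℕ => (r : ℝ) ^ k * momentM r m k)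
      Filter.atTop (nhds (((m - 1 + k).factorial : ℝ) / ((m - 1).factorial : ℝ))) := by
  set S := piAntidiag (univ : Finset (Fin m)) k
  have hexpand (r : ℕ) : (r : ℝ) ^ k * momentM r m k = ∑ n ∈ S, (multinomial univ n : ℝ) *
      ∏ i, ((r : ℝ) ^ n i * ∫ x in Set.Icc (0 : ℝ) 1, x ^ n i * (r * (1 - x) ^ (r - 1))) := by
    rw [momentM, setIntegral_Icc_sum_pow_mul_prod (f := fun t => r * (1 - t) ^ (r - 1)) _ _
      (by fun_prop), mul_sum]
    refine sum_congr rfl fun n hn => ?_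
    rw [prod_mul_distrib, prod_pow_eq_pow_sum, (mem_piAntidiag.1 hn).1, mul_left_comm]
    rfl
  have hlim := tendsto_finsetSum S fun n _ => (tendsto_finsetProd univ fun i _ =>
    tendsto_pow_mul_setIntegral_pow_mul_betaOneDensity (n i)).const_mul (multinomial univ n : ℝ)
  have hvalue : ∑ n ∈ S, (multinomial univ n : ℝ) * ∏ i, ((n i)! : ℝ) =
      (m - 1 + k)! / (m - 1)! := by
    have h := sum_piAntidiag_multinomial_mul_prod_factorial (Fin m) k
    rw [Fintype.card_fin, show m + k - 1 = m - 1 + k by omega] at h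
    rw [eq_div_iff (by positivity), ← add_choose_mul_factorial_mul_factorial, mul_right_comm]
    exact_mod_cast congrArg (· * (m - 1)!) h
  rw [← hvalue]
  simpa only [hexpand] using hlim
end

section
/- Let m, r be positive integers and p a natural number with p ≥ r·m. Then S_r(p,m) ≥ p! · m^{p−rm} / (m! · (r!)^m · (p−rm)! · (r+1)^{p−rm}). -/
/-- `stirlingAssoc r p m` is the `r`-associated Stirling number of the second kind:
the number of partitions of `{1,…,p}` into exactly `m` parts, each of size at least `r`. -/
noncomputable def stirlingAssoc (r p m : ℕ) : ℕ :=
  Nat.card {P : Finpartition (Finset.univ : Finset (Fin p)) //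
    P.parts.card = m ∧ ∀ s ∈ P.parts, r ≤ s.card}

/-!
Double counting. Call a pair `(ι, c)` admissible if `c : [p] → [m]` is a coloring and
`ι : [m] × [r] ↪ [p]` places, for every color `j`, an ordered `r`-tuple of distinct points of
color `j`. Choosing `ι` first gives `p!/(p-rm)! · m^(p-rm)` admissible pairs. Choosing `c` first,
every color class must have a size `b_j ≥ r`, and then `ι` is chosen in at most
`∏ b_j (b_j - 1) ⋯ (b_j - r + 1) ≤ ∏ r! (r+1)^(b_j - r) = (r!)^m (r+1)^(p-rm)` ways. Finally, each
partition counted by `S_r(p,m)` comes from at most `m!` such colorings, one for each labelling of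
its parts.
-/

open Finset Nat

theorem Nat.descFactorial_le_factorial_mul_pow {n r : ℕ} (h : r ≤ n) :
    n.descFactorial r ≤ r ! * (r + 1) ^ (n - r) := by
  obtain ⟨k, rfl⟩ := Nat.exists_eq_add_of_le h
  rw [Nat.add_sub_cancel_left]
  induction k with
  | zero => simp [Nat.descFactorial_self]
  | succ k ih =>
    -- the ratio `(r + k + 1).descFactorial r / (r + k).descFactorial r = (r + k + 1) / (k + 1)`
    -- is at most `r + 1`
    have hstep := Nat.succ_descFactorial (r + k) r
    rw [show r + k + 1 - r = k + 1 by omega] at hstep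
    have hmul : (k + 1) * (r + (k + 1)).descFactorial r ≤
        (k + 1) * ((r + 1) * (r + k).descFactorial r) := by
      rw [← add_assoc, hstep, ← mul_assoc, mul_comm (k + 1)]
      exact Nat.mul_le_mul_right _ (by nlinarith)
    calc (r + (k + 1)).descFactorial r ≤ (r + 1) * (r + k).descFactorial r :=
          Nat.le_of_mul_le_mul_left hmul k.succ_pos
      _ ≤ (r + 1) * (r ! * (r + 1) ^ k) := Nat.mul_le_mul_left _ (ih (by omega))
      _ = r ! * (r + 1) ^ (k + 1) := by ring

theorem prod_descFactorial_le {κ : Type*} [Fintype κ] {r : ℕ} (b : κ → ℕ) (hb : ∀ j, r ≤ b j) :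
    ∏ j, (b j).descFactorial r ≤
      r ! ^ Fintype.card κ * (r + 1) ^ (∑ j, b j - r * Fintype.card κ) := by
  have hsum : ∑ j, b j - r * Fintype.card κ = ∑ j, (b j - r) := by
    rw [sum_tsub_distrib _ fun j _ => hb j]
    simp [mul_comm]
  calc ∏ j, (b j).descFactorial r ≤ ∏ j, r ! * (r + 1) ^ (b j - r) :=
        prod_le_prod' fun j _ => Nat.descFactorial_le_factorial_mul_pow (hb j)
    _ = _ := by rw [prod_mul_distrib, prod_const, prod_pow_eq_pow_sum, hsum, Finset.card_univ]

section Colorings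

variable {α β : Type*} [Fintype α] [Fintype β] [DecidableEq β]

theorem card_filter_embedding_fiberwise_le (r : ℕ) (c : α → β) :
    #{ι : β × Fin r ↪ α | ∀ q, c (ι q) = q.1} ≤ ∏ j, (#{x | c x = j}).descFactorial r := by
  let restrict (ι : {ι : β × Fin r ↪ α // ∀ q, c (ι q) = q.1}) (j : β) :
      Fin r ↪ {x // c x = j} :=
    ⟨fun a => ⟨ι.1 (j, a), ι.2 (j, a)⟩, fun a b hab => by
      simpa using ι.1.injective (congrArg Subtype.val hab)⟩
  have restrict_injective : Function.Injective restrict := by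
    intro ι₁ ι₂ h
    ext ⟨j, a⟩
    exact congrArg Subtype.val (DFunLike.congr_fun (congr_fun h j) a)
  calc #{ι : β × Fin r ↪ α | ∀ q, c (ι q) = q.1}
      = Fintype.card {ι : β × Fin r ↪ α // ∀ q, c (ι q) = q.1} :=
        (Fintype.card_subtype _).symm
    _ ≤ Fintype.card (∀ j, Fin r ↪ {x // c x = j}) :=
      Fintype.card_le_of_injective _ restrict_injective
    _ = ∏ j, (#{x | c x = j}).descFactorial r := by
      simp [Fintype.card_pi, Fintype.card_embedding_eq, Fintype.card_subtype]

variable [DecidableEq α]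

theorem card_filter_comp_embedding_eq {γ : Type*} [Fintype γ] (ι : γ ↪ α) (g : γ → β) :
    #{c : α → β | ∀ q, c (ι q) = g q} = Fintype.card β ^ (Fintype.card α - Fintype.card γ) := by
  set t : α → Finset β := fun x =>
    if h : x ∈ Set.range ι then {g (ι.invOfMemRange ⟨x, h⟩)} else univ
  have hmem : ({c : α → β | ∀ q, c (ι q) = g q} : Finset _) = Fintype.piFinset t := by
    ext c
    simp only [mem_filter, mem_univ, true_and, Fintype.mem_piFinset, t]
    constructor
    · intro hc x
      split_ifs with h
      · obtain ⟨q, rfl⟩ := h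
        simp [hc]
      · exact mem_univ _
    · intro hc q
      simpa using hc (ι q)
  rw [hmem, Fintype.card_piFinset]
  simp only [t, apply_dite Finset.card, card_singleton]
  rw [Fintype.prod_dite, prod_const_one, one_mul, prod_const, Finset.card_univ, Finset.card_univ,
    Fintype.card_subtype_compl, Set.card_range_of_injective ι.injective]

theorem descFactorial_mul_pow_le_card_filter_mul (r : ℕ) :
    (Fintype.card α).descFactorial (r * Fintype.card β) *
        Fintype.card β ^ (Fintype.card α - r * Fintype.card β) ≤
      #{c : α → β | ∀ j, r ≤ #{x | c x = j}} *
        (r ! ^ Fintype.card β * (r + 1) ^ (Fintype.card α - r * Fintype.card β)) := by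
  set K := r ! ^ Fintype.card β * (r + 1) ^ (Fintype.card α - r * Fintype.card β)
  have fiber_bound (c : α → β) :
      #{ι : β × Fin r ↪ α | ∀ q, c (ι q) = q.1} ≤ if ∀ j, r ≤ #{x | c x = j} then K else 0 := by
    refine (card_filter_embedding_fiberwise_le r c).trans ?_
    split_ifs with hc
    · refine (prod_descFactorial_le _ hc).trans_eq ?_
      rw [← card_eq_sum_card_fiberwise fun x _ => mem_univ (c x), Finset.card_univ]
    · push Not at hc
      obtain ⟨j, hj⟩ := hc
      exact (prod_eq_zero (mem_univ j) (Nat.descFactorial_eq_zero_iff_lt.2 hj)).le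
  calc (Fintype.card α).descFactorial (r * Fintype.card β) *
          Fintype.card β ^ (Fintype.card α - r * Fintype.card β)
      = ∑ ι : β × Fin r ↪ α, #{c : α → β | ∀ q, c (ι q) = q.1} := by
        simp only [card_filter_comp_embedding_eq, sum_const, Finset.card_univ, smul_eq_mul,
          Fintype.card_embedding_eq, Fintype.card_prod, Fintype.card_fin, mul_comm r]
    _ = ∑ c : α → β, #{ι : β × Fin r ↪ α | ∀ q, c (ι q) = q.1} :=
        sum_card_bipartiteAbove_eq_sum_card_bipartiteBelow
          (fun (ι : β × Fin r ↪ α) (c : α → β) => ∀ q, c (ι q) = q.1) (s := univ) (t := univ)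
    _ ≤ ∑ c : α → β, if ∀ j, r ≤ #{x | c x = j} then K else 0 :=
        sum_le_sum fun c _ => fiber_bound c
    _ = #{c : α → β | ∀ j, r ≤ #{x | c x = j}} * K := by rw [← sum_filter, sum_const, smul_eq_mul]

def fiberPartition (c : α → β) (hc : Function.Surjective c) : Finpartition (univ : Finset α) :=
  .ofExistsUnique (univ.image fun j => ({x | c x = j} : Finset α)) (fun _ _ => subset_univ _)
    (fun x _ => ⟨({y | c y = c x} : Finset α), ⟨mem_image_of_mem _ (mem_univ _), by simp⟩, by
      rintro _ ⟨ht, hx⟩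
      obtain ⟨j, -, rfl⟩ := mem_image.1 ht
      rw [(mem_filter.1 hx).2]⟩)
    (fun h => by
      obtain ⟨j, -, hj⟩ := mem_image.1 h
      obtain ⟨x, hx⟩ := hc j
      simpa [hx] using congrArg (x ∈ ·) hj)

theorem fiberPartition_parts (c : α → β) (hc : Function.Surjective c) :
    (fiberPartition c hc).parts = univ.image fun j => ({x | c x = j} : Finset α) :=
  rfl

noncomputable def fiberPartitionEquiv (c : α → β) (hc : Function.Surjective c) :
    β ≃ (fiberPartition c hc).parts :=
  Equiv.ofBijective (fun j => ⟨({x | c x = j} : Finset α), mem_image_of_mem _ (mem_univ j)⟩)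
    ⟨fun i j hij => by
      obtain ⟨x, rfl⟩ := hc i
      simpa using congrArg (x ∈ ·) (congrArg Subtype.val hij),
     fun ⟨t, ht⟩ => by
      obtain ⟨j, -, rfl⟩ := mem_image.1 (fiberPartition_parts c hc ▸ ht)
      exact ⟨j, rfl⟩⟩

theorem card_filter_le_factorial_mul_card_finpartition {r : ℕ} (hr : 0 < r) :
    #{c : α → β | ∀ j, r ≤ #{x | c x = j}} ≤ (Fintype.card β) ! *
      Nat.card {P : Finpartition (univ : Finset α) //
        #P.parts = Fintype.card β ∧ ∀ s ∈ P.parts, r ≤ #s} := by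
  let S := {P : Finpartition (univ : Finset α) // #P.parts = Fintype.card β ∧ ∀ s ∈ P.parts, r ≤ #s}
  let G := {c : α → β // ∀ j, r ≤ #{x | c x = j}}
  have surj (c : G) : Function.Surjective c.1 := fun j => by
    obtain ⟨x, hx⟩ := card_pos.1 (hr.trans_le (c.2 j))
    exact ⟨x, (mem_filter.1 hx).2⟩
  let partition (c : G) : S :=
    ⟨fiberPartition c.1 (surj c),
      by rw [← Fintype.card_coe, ← Fintype.card_congr (fiberPartitionEquiv c.1 (surj c))],
      fun s hs => by
        obtain ⟨j, -, rfl⟩ := mem_image.1 (fiberPartition_parts c.1 (surj c) ▸ hs)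
        exact c.2 j⟩
  let labelled (c : G) : Σ P : S, β ≃ P.1.parts :=
    ⟨partition c, fiberPartitionEquiv c.1 (surj c)⟩
  let coloring (P : Σ P : S, β ≃ P.1.parts) (x : α) : β :=
    P.2.symm ⟨P.1.1.part x, P.1.1.part_mem.2 (mem_univ x)⟩
  have coloring_labelled (c : G) : coloring (labelled c) = c.1 := by
    funext x
    refine (Equiv.symm_apply_eq _).2 (Subtype.ext ?_)
    show (fiberPartition c.1 (surj c)).part x = ({y | c.1 y = c.1 x} : Finset α)
    refine (fiberPartition c.1 (surj c)).part_eq_of_mem ?_ (mem_filter.2 ⟨mem_univ x, rfl⟩)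
    rw [fiberPartition_parts]
    exact mem_image_of_mem _ (mem_univ _)
  have labelled_injective : Function.Injective labelled := fun c d h =>
    Subtype.ext (by rw [← coloring_labelled c, ← coloring_labelled d, h])
  calc #{c : α → β | ∀ j, r ≤ #{x | c x = j}} = Fintype.card G := (Fintype.card_subtype _).symm
    _ ≤ Fintype.card (Σ P : S, β ≃ P.1.parts) :=
      Fintype.card_le_of_injective _ labelled_injective
    _ = ∑ _P : S, (Fintype.card β) ! := Fintype.card_sigma.trans <| sum_congr rfl fun P _ =>
      Fintype.card_equiv (Fintype.equivOfCardEq (by rw [Fintype.card_coe, P.2.1]))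
    _ = (Fintype.card β) ! * Nat.card S := by
      rw [sum_const, Finset.card_univ, smul_eq_mul, Nat.card_eq_fintype_card, mul_comm]

end Colorings

theorem stmt_16_general (m r : ℕ) (hr : 0 < r) (p : ℕ) (hp : r * m ≤ p) :
    (stirlingAssoc r p m : ℝ) ≥
      (p.factorial : ℝ) * (m : ℝ) ^ (p - r * m) /
        ((m.factorial : ℝ) * (r.factorial : ℝ) ^ m * ((p - r * m).factorial : ℝ) *
          ((r : ℝ) + 1) ^ (p - r * m)) := by
  have hcount := descFactorial_mul_pow_le_card_filter_mul (α := Fin p) (β := Fin m) r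
  have hpart := card_filter_le_factorial_mul_card_finpartition (α := Fin p) (β := Fin m) hr
  simp only [Fintype.card_fin] at hcount hpart
  have hS : _ ≤ m ! * stirlingAssoc r p m := hpart
  have key : p ! * m ^ (p - r * m) ≤
      stirlingAssoc r p m * (m ! * r ! ^ m * (p - r * m)! * (r + 1) ^ (p - r * m)) :=
    calc p ! * m ^ (p - r * m)
        = (p - r * m)! * (p.descFactorial (r * m) * m ^ (p - r * m)) := by
          rw [← Nat.factorial_mul_descFactorial hp, mul_assoc]
      _ ≤ (p - r * m)! * (m ! * stirlingAssoc r p m * (r ! ^ m * (r + 1) ^ (p - r * m))) :=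
          Nat.mul_le_mul_left _ (hcount.trans (Nat.mul_le_mul_right _ hS))
      _ = _ := by ring
  rw [ge_iff_le, div_le_iff₀ (by positivity)]
  exact_mod_cast key

theorem stmt_16 (m r : ℕ) (hm : 0 < m) (hr : 0 < r) (p : ℕ) (hp : r * m ≤ p) :
    (stirlingAssoc r p m : ℝ) ≥
      (p.factorial : ℝ) * (m : ℝ) ^ (p - r * m) /
        ((m.factorial : ℝ) * (r.factorial : ℝ) ^ m * ((p - r * m).factorial : ℝ) *
          ((r : ℝ) + 1) ^ (p - r * m)) :=
  stmt_16_general m r hr p hp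
end
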